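/- Let A be a UFD containing ℚ, let B be an irreducible locally nilpotent derivation of A, and let E be a locally nilpotent derivation of A that vanishes on ker B. Then there exists f ∈ ker B with E = f·B. -/

import Mathlib

/-- Local nilpotency of a map. -/
def IsLND {A : Type*} [Zero A] (D : A → A) : Prop := ∀ a : A, ∃ n : ℕ, D^[n] a = 0

/-- A locally nilpotent derivation `B` is irreducible if `B ≠ 0` and whenever
`B = g • B'` with `B'` locally nilpotent and `g ∈ ker B'`, `g` is a unit. -/
def IsIrreducibleLND {A : Type*} [CommRing A] [Algebra ℚ A] (B : Derivation ℚ A A) : Prop :=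
  B ≠ 0 ∧ IsLND ⇑B ∧
    ∀ (g : A) (B' : Derivation ℚ A A), IsLND ⇑B' → B' g = 0 → B = g • B' → IsUnit g

/-!
Choose a local slice `s` of `B`: `B s ≠ 0` and `B (B s) = 0`. The derivation `B s • E - E s • B`
kills `ker B` and `s`, and every such derivation vanishes: if `B^[n+1] a = 0`, then
`n! * (B s)^n * a - s^n * B^[n] a` is killed by `B^[n]`, which drives an induction on `n`.
Hence `B s * E = E s * B`. As `B` is irreducible, no prime divides all values of `B`, so
`B s ∣ E s` and `E = f • B`. Finally, if `B f ≠ 0` then `f • B` never lowers the `B`-degree of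
an element outside `ker B`, so it could not be locally nilpotent.
-/

open Finset Function

namespace Derivation

section Iterate

variable {R A : Type*} [CommRing R] [CommRing A] [Algebra R A] (D : Derivation R A A)

theorem iterate_apply_mul (n : ℕ) (a b : A) :
    D^[n] (a * b) = ∑ ij ∈ antidiagonal n, n.choose ij.1 • (D^[ij.1] a * D^[ij.2] b) := by
  induction n with
  | zero => simp
  | succ n ih =>
    rw [sum_antidiagonal_choose_succ_nsmul (fun i j => D^[i] a * D^[j] b) n]
    simp only [iterate_succ_apply', ih, map_sum, map_nsmul, leibniz, smul_eq_mul, nsmul_add,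
      sum_add_distrib]
    congr 1
    refine sum_congr rfl fun ⟨i, j⟩ hij => ?_
    rw [n.choose_symm_of_eq_add (mem_antidiagonal.1 hij).symm]
    ring

theorem iterate_mul_of_apply_eq_zero {r : A} (hr : D r = 0) (n : ℕ) (a : A) :
    D^[n] (r * a) = r * D^[n] a := by
  induction n with
  | zero => rfl
  | succ n ih => simp [iterate_succ_apply', ih, leibniz, hr]

theorem iterate_pow_self {s : A} (hs : D (D s) = 0) (n : ℕ) :
    D^[n] (s ^ n) = (n.factorial : A) * D s ^ n := by
  induction n with
  | zero => simp
  | succ n ih =>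
    have h : D (s ^ (n + 1)) = ((n + 1 : A) * D s) * s ^ n := by
      rw [leibniz_pow, Nat.add_sub_cancel, nsmul_eq_mul, smul_eq_mul]
      push_cast
      ring
    rw [iterate_succ_apply, h, iterate_mul_of_apply_eq_zero D (by simp [hs]), ih,
      Nat.factorial_succ]
    push_cast
    ring

theorem iterate_smul_apply {p : A} (hp : D p = 0) (n : ℕ) (a : A) :
    (⇑(p • D))^[n] a = p ^ n * D^[n] a := by
  induction n with
  | zero => simp
  | succ n ih =>
    rw [iterate_succ_apply', ih, smul_apply, smul_eq_mul, leibniz, leibniz_pow, hp,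
      iterate_succ_apply']
    simp only [smul_eq_mul, smul_zero, mul_zero, add_zero]
    ring

end Iterate

section Division

variable {R A : Type*} [CommRing R] [CommRing A] [IsDomain A] [Algebra R A]
  {D : Derivation R A A} {p : A} {q : A → A}

noncomputable def ofMulLeftEq (hp : p ≠ 0) (hq : ∀ a, p * q a = D a) : Derivation R A A where
  toFun := q
  map_add' a b := mul_left_cancel₀ hp <| by simp only [mul_add, hq, map_add]
  map_smul' r a := mul_left_cancel₀ hp <| by
    simp only [RingHom.id_apply, mul_smul_comm, hq, map_smul]
  map_one_eq_zero' := mul_left_cancel₀ hp <| by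
    simp only [LinearMap.coe_mk, AddHom.coe_mk, hq, map_one_eq_zero, mul_zero]
  leibniz' a b := mul_left_cancel₀ hp <| by
    simp only [LinearMap.coe_mk, AddHom.coe_mk, smul_eq_mul, mul_add, mul_left_comm p, hq,
      leibniz]

@[simp]
theorem ofMulLeftEq_apply (hp : p ≠ 0) (hq : ∀ a, p * q a = D a) (a : A) :
    ofMulLeftEq hp hq a = q a :=
  rfl

theorem smul_ofMulLeftEq (hp : p ≠ 0) (hq : ∀ a, p * q a = D a) : p • ofMulLeftEq hp hq = D :=
  ext hq

end Division

end Derivation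

/-- One more than the usual `D`-degree, so that `lndDeg D 0 = 0` and `lndDeg D a = 1` for
`a ≠ 0` in `ker D`. -/
noncomputable def lndDeg {A : Type*} [Zero A] (D : A → A) (a : A) : ℕ := sInf {n | D^[n] a = 0}

section Degree

variable {R A : Type*} [CommRing R] [CommRing A] [Algebra R A] {D : Derivation R A A}
  {a b : A}

theorem iterate_eq_zero_iff_lndDeg_le (hD : IsLND ⇑D) {n : ℕ} :
    D^[n] a = 0 ↔ lndDeg D a ≤ n := by
  refine ⟨fun h => Nat.sInf_le h, fun h => ?_⟩
  obtain ⟨k, rfl⟩ := Nat.exists_eq_add_of_le h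
  rw [add_comm, iterate_add_apply, show D^[lndDeg D a] a = 0 from Nat.sInf_mem (hD a),
    iterate_map_zero]

theorem lndDeg_eq_zero_iff (hD : IsLND ⇑D) : lndDeg D a = 0 ↔ a = 0 := by
  simpa using (iterate_eq_zero_iff_lndDeg_le hD (a := a) (n := 0)).symm

theorem one_lt_lndDeg_iff (hD : IsLND ⇑D) : 1 < lndDeg D a ↔ D a ≠ 0 := by
  simpa using (iterate_eq_zero_iff_lndDeg_le hD (a := a) (n := 1)).not.symm

theorem lndDeg_apply_add_one (hD : IsLND ⇑D) (ha : a ≠ 0) :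
    lndDeg D (D a) + 1 = lndDeg D a := by
  have key : ∀ n, lndDeg D (D a) ≤ n ↔ lndDeg D a ≤ n + 1 := fun n => by
    rw [← iterate_eq_zero_iff_lndDeg_le hD, ← iterate_eq_zero_iff_lndDeg_le hD,
      iterate_succ_apply]
  have hpos := (lndDeg_eq_zero_iff hD).not.2 ha
  have h1 := (key _).1 le_rfl
  have h2 := (key (lndDeg D a - 1)).2 (by omega)
  omega

theorem lndDeg_mul [IsDomain A] [CharZero A] (hD : IsLND ⇑D) (ha : a ≠ 0) (hb : b ≠ 0) :
    lndDeg D (a * b) + 1 = lndDeg D a + lndDeg D b := by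
  obtain ⟨m, hm⟩ := Nat.exists_eq_succ_of_ne_zero ((lndDeg_eq_zero_iff hD).not.2 ha)
  obtain ⟨n, hn⟩ := Nat.exists_eq_succ_of_ne_zero ((lndDeg_eq_zero_iff hD).not.2 hb)
  have vanish : ∀ i j, m + n ≤ i + j → ¬(i = m ∧ j = n) → D^[i] a * D^[j] b = 0 := by
    intro i j hij hne
    rcases le_or_gt (m + 1) i with hi | hi
    · rw [(iterate_eq_zero_iff_lndDeg_le hD).2 (hm ▸ hi), zero_mul]
    · rw [(iterate_eq_zero_iff_lndDeg_le hD).2 (by omega : lndDeg D b ≤ j), mul_zero]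
  have top : D^[m + n] (a * b) = (m + n).choose m • (D^[m] a * D^[n] b) := by
    rw [D.iterate_apply_mul, sum_eq_single (m, n)]
    · rintro ⟨i, j⟩ hij hne
      rw [vanish i j (mem_antidiagonal.1 hij).ge (by simpa using hne), smul_zero]
    · simp
  have top_ne : D^[m + n] (a * b) ≠ 0 := by
    rw [top, nsmul_eq_mul]
    refine mul_ne_zero (Nat.cast_ne_zero.2 (Nat.choose_pos (by omega)).ne') (mul_ne_zero ?_ ?_)
      <;> rw [Ne, iterate_eq_zero_iff_lndDeg_le hD] <;> omega
  have above : D^[m + n + 1] (a * b) = 0 := by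
    rw [D.iterate_apply_mul]
    refine sum_eq_zero fun ⟨i, j⟩ hij => ?_
    have hij := mem_antidiagonal.1 hij
    rw [vanish i j (by omega) (by omega), smul_zero]
  rw [Ne, iterate_eq_zero_iff_lndDeg_le hD] at top_ne
  rw [iterate_eq_zero_iff_lndDeg_le hD] at above
  omega

end Degree

section Slice

variable {R A : Type*} [CommRing R] [CommRing A] [Algebra R A] {B : Derivation R A A}

theorem exists_slice (hB : IsLND ⇑B) (hB0 : B ≠ 0) : ∃ s, B s ≠ 0 ∧ B (B s) = 0 := by
  obtain ⟨a, ha : B a ≠ 0⟩ := DFunLike.ne_iff.1 hB0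
  have h2 := (one_lt_lndDeg_iff hB).2 ha
  refine ⟨B^[lndDeg B a - 2] a, ?_, ?_⟩
  · rw [← iterate_succ_apply' (⇑B), Ne, iterate_eq_zero_iff_lndDeg_le hB]
    omega
  · rw [← iterate_succ_apply' (⇑B), ← iterate_succ_apply' (⇑B),
      iterate_eq_zero_iff_lndDeg_le hB]
    omega

theorem eq_zero_of_apply_slice_eq_zero [IsDomain A] [CharZero A] (hB : IsLND ⇑B) {s : A}
    (hs : B s ≠ 0) (hss : B (B s) = 0) {D : Derivation R A A} (hD : ∀ a, B a = 0 → D a = 0)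
    (hDs : D s = 0) : D = 0 := by
  suffices ∀ n a, B^[n] a = 0 → D a = 0 from
    Derivation.ext fun a => (hB a).elim fun n hn => this n a hn
  intro n
  induction n with
  | zero => rintro a rfl; exact map_zero D
  | succ n ih =>
    intro a ha
    set w := B^[n] a
    have hw : B w = 0 := by rwa [← iterate_succ_apply' (⇑B)]
    set r : A := n.factorial * B s ^ n
    have hBr : B r = 0 := by simp [r, Derivation.leibniz_pow, hss]
    have key : D (r * a - s ^ n * w) = 0 := ih _ <| by
      rw [iterate_map_sub, B.iterate_mul_of_apply_eq_zero hBr, mul_comm (s ^ n),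
        B.iterate_mul_of_apply_eq_zero hw, B.iterate_pow_self hss]
      ring
    have hr : r * D a = 0 := by
      simpa [Derivation.leibniz, Derivation.leibniz_pow, hD r hBr, hDs, hD w hw] using key
    exact (mul_eq_zero.1 hr).resolve_left
      (mul_ne_zero (Nat.cast_ne_zero.2 n.factorial_ne_zero) (pow_ne_zero n hs))

end Slice

section Irreducible

variable {R A : Type*} [CommRing R] [CommRing A] [IsDomain A] [Algebra R A]

theorem apply_eq_zero_of_forall_dvd [CharZero A] {D : Derivation R A A} (hD : IsLND ⇑D)
    {p : A} (hp : p ≠ 0) (h : ∀ a, p ∣ D a) : D p = 0 := by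
  -- otherwise `D p = p * t` would have smaller degree than `p`, yet degree at least that of `p`
  by_contra hDp
  obtain ⟨t, ht⟩ := h p
  have ht0 : t ≠ 0 := by
    rintro rfl
    exact hDp (by simpa using ht)
  have h1 := lndDeg_apply_add_one hD hp
  have h2 := lndDeg_mul hD hp ht0
  have h3 := (lndDeg_eq_zero_iff hD).not.2 ht0
  rw [ht] at h1
  omega

theorem apply_eq_zero_of_isLND_smul [CharZero A] {B : Derivation R A A} (hB : IsLND ⇑B)
    {f : A} (hf : IsLND ⇑(f • B)) : B f = 0 := by
  by_contra hBf
  have hf0 : f ≠ 0 := by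
    rintro rfl
    exact hBf (map_zero B)
  have hdeg_f := (one_lt_lndDeg_iff hB).2 hBf
  have step : ∀ x, 1 < lndDeg B x → 1 < lndDeg B ((f • B) x) := by
    intro x hx
    have hBx := (one_lt_lndDeg_iff hB).1 hx
    have hx0 : x ≠ 0 := by
      rintro rfl
      exact hBx (map_zero B)
    have h1 := lndDeg_mul hB hf0 hBx
    have h2 := lndDeg_apply_add_one hB hx0
    rw [Derivation.smul_apply, smul_eq_mul]
    omega
  have hiter : ∀ n, 1 < lndDeg B ((⇑(f • B))^[n] f) := fun n => by
    induction n with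
    | zero => exact hdeg_f
    | succ n ih => exact iterate_succ_apply' (⇑(f • B)) n f ▸ step _ ih
  obtain ⟨n, hn⟩ := hf f
  have := hiter n
  rw [hn, (lndDeg_eq_zero_iff hB).2 rfl] at this
  omega

end Irreducible

namespace IsIrreducibleLND

variable {A : Type*} [CommRing A] [IsDomain A] [Algebra ℚ A] {B : Derivation ℚ A A}

theorem exists_not_dvd_apply (hB : IsIrreducibleLND B) {p : A} (hp : Prime p) :
    ∃ a, ¬p ∣ B a := by
  have := charZero_of_injective_algebraMap (algebraMap ℚ A).injective
  by_contra! h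
  have hBp := apply_eq_zero_of_forall_dvd hB.2.1 hp.ne_zero h
  choose q hq using h
  set B' := Derivation.ofMulLeftEq hp.ne_zero fun a => (hq a).symm
  have hB'p : B' p = 0 := mul_left_cancel₀ hp.ne_zero <| by simp [B', ← hq, hBp]
  refine hp.not_isUnit (hB.2.2 p B' (fun a => ?_) hB'p (Derivation.smul_ofMulLeftEq _ _).symm)
  obtain ⟨n, hn⟩ := hB.2.1 a
  refine ⟨n, (mul_eq_zero.1 ?_).resolve_left (pow_ne_zero n hp.ne_zero)⟩
  rw [← B'.iterate_smul_apply hB'p, Derivation.smul_ofMulLeftEq, hn]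

theorem dvd_of_forall_dvd_mul_apply [UniqueFactorizationMonoid A] (hB : IsIrreducibleLND B)
    {c y : A} (h : ∀ a, c ∣ y * B a) : c ∣ y := by
  induction c using UniqueFactorizationMonoid.induction_on_prime generalizing y with
  | h₁ =>
    obtain ⟨a, ha : B a ≠ 0⟩ := DFunLike.ne_iff.1 hB.1
    simpa [ha] using h a
  | h₂ x hx => exact hx.dvd
  | h₃ c p _ hp ih =>
    obtain ⟨a, ha⟩ := hB.exists_not_dvd_apply hp
    obtain ⟨y, rfl⟩ := (hp.dvd_or_dvd (dvd_of_mul_right_dvd (h a))).resolve_right ha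
    exact mul_dvd_mul_left p <| ih fun b =>
      (mul_dvd_mul_iff_left hp.ne_zero).1 (by simpa [mul_assoc] using h b)

end IsIrreducibleLND

/-- If `A` is a UFD containing `ℚ`, `B` an irreducible locally nilpotent
derivation of `A`, and `E` a locally nilpotent derivation of `A` vanishing on
`ker B`, then `E = f • B` for some `f ∈ ker B`. -/
theorem lnd_vanishing_on_ker_is_multiple {A : Type*} [CommRing A] [IsDomain A]
    [UniqueFactorizationMonoid A] [Algebra ℚ A]
    (B E : Derivation ℚ A A) (hB : IsLND ⇑B) (hirr : IsIrreducibleLND B)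
    (hE : IsLND ⇑E) (hEker : ∀ a : A, B a = 0 → E a = 0) :
    ∃ f : A, B f = 0 ∧ E = f • B := by
  have := charZero_of_injective_algebraMap (algebraMap ℚ A).injective
  obtain ⟨s, hs, hss⟩ := exists_slice hB hirr.1
  have hslice : B s • E - E s • B = 0 :=
    eq_zero_of_apply_slice_eq_zero hB hs hss (fun a ha => by simp [ha, hEker a ha])
      (by simp [mul_comm])
  have hid : ∀ a, B s * E a = E s * B a := fun a => by
    simpa [sub_eq_zero] using congrArg (· a) hslice
  obtain ⟨f, hf⟩ : B s ∣ E s :=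
    hirr.dvd_of_forall_dvd_mul_apply fun a => ⟨E a, (hid a).symm⟩
  have hEf : E = f • B := Derivation.ext fun a => mul_left_cancel₀ hs <| by
    rw [Derivation.smul_apply, smul_eq_mul, hid, hf, mul_assoc]
  exact ⟨f, apply_eq_zero_of_isLND_smul hB (hEf ▸ hE), hEf⟩
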